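/- Let n ≥ m ≥ 1 be integers, let u ∈ ℝᵐ with u_j > 0 for all j, and let w ∈ ℝᵐ with w_j ≥ 0 for all j and Σ_{j=1}^m u_j w_j = 2m. Define u′_j := min{u_j, 1/w_j} if w_j > 0 and u′_j := u_j if w_j = 0, and let ũ ∈ ℝᵐ satisfy u′_j ≤ ũ_j ≤ (1 + 1/(3n))·u′_j for all j. Then Σ_{j=1}^m log(u_j / ũ_j) > (1/2)·log(m + 1), where log denotes the natural logarithm. -/

import Mathlib

/-!
Capping `u_j` at `1 / w_j` divides it by `max 1 (u_j w_j)`, so before rounding the potential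
drops by `∑ log (max 1 (u_j w_j)) = log ∏ (1 + (max 1 (u_j w_j) - 1))`. Since `∑ u_j w_j = 2m`,
the excesses `max 1 (u_j w_j) - 1` add up to at least `m`, and `∏ (1 + y_j) ≥ 1 + ∑ y_j` gives a
drop of at least `log (m + 1)`. Rounding costs at most `log (1 + 1/(3n)) ≤ 1/(3n)` per coordinate,
hence at most `1/3` in total, which is less than `½ log 2 ≤ ½ log (m + 1)`.
-/

open Finset Real

theorem Finset.one_add_sum_le_prod_one_add {ι R : Type*} [CommSemiring R] [PartialOrder R]
    [IsOrderedRing R] (s : Finset ι) {y : ι → R} (hy : ∀ i ∈ s, 0 ≤ y i) :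
    1 + ∑ i ∈ s, y i ≤ ∏ i ∈ s, (1 + y i) := by
  induction s using Finset.cons_induction with
  | empty => simp
  | cons a s ha ih =>
    rw [sum_cons, prod_cons]
    have hya : 0 ≤ y a := hy a (mem_cons_self a s)
    have hys : ∀ i ∈ s, 0 ≤ y i := fun i hi => hy i (mem_cons_of_mem hi)
    calc 1 + (y a + ∑ i ∈ s, y i)
        ≤ 1 + (y a + ∑ i ∈ s, y i) + y a * ∑ i ∈ s, y i :=
          le_add_of_nonneg_right (mul_nonneg hya (sum_nonneg hys))
      _ = (1 + y a) * (1 + ∑ i ∈ s, y i) := by ring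
      _ ≤ (1 + y a) * ∏ i ∈ s, (1 + y i) :=
          mul_le_mul_of_nonneg_left (ih hys) (add_nonneg zero_le_one hya)

theorem Finset.one_add_sum_sub_card_le_prod_max_one {ι : Type*} (s : Finset ι) (x : ι → ℝ) :
    1 + ∑ i ∈ s, x i - #s ≤ ∏ i ∈ s, max 1 (x i) := by
  have hexcess : ∑ i ∈ s, x i - #s ≤ ∑ i ∈ s, (max 1 (x i) - 1) := by
    rw [sum_sub_distrib, sum_const, nsmul_one]
    gcongr with i
    exact le_max_right _ _
  calc 1 + ∑ i ∈ s, x i - #s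
      ≤ 1 + ∑ i ∈ s, (max 1 (x i) - 1) := by linarith
    _ ≤ ∏ i ∈ s, (1 + (max 1 (x i) - 1)) :=
        one_add_sum_le_prod_one_add s fun i _ => sub_nonneg.2 (le_max_left _ _)
    _ = ∏ i ∈ s, max 1 (x i) := by simp only [add_sub_cancel]

theorem ite_min_one_div_eq_div_max {u w : ℝ} (hu : 0 < u) (hw : 0 ≤ w) :
    (if 0 < w then min u (1 / w) else u) = u / max 1 (u * w) := by
  split_ifs with hw0
  · rcases le_total (u * w) 1 with huw | huw
    · rw [max_eq_left huw, div_one, min_eq_left ((le_div_iff₀ hw0).2 huw)]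
    · rw [max_eq_right huw, min_eq_right ((div_le_iff₀ hw0).2 huw), div_mul_cancel_left₀ hu.ne',
        one_div]
  · rw [le_antisymm (not_lt.1 hw0) hw, mul_zero, max_eq_left zero_le_one, div_one]

theorem Real.log_div_sub_le_log_div {u v t ε : ℝ} (hu : u ≠ 0) (hv : 0 < v) (ht : 0 < t)
    (htv : t ≤ (1 + ε) * v) : log (u / v) - ε ≤ log (u / t) := by
  have hratio : log (t / v) ≤ ε := by
    have := log_le_sub_one_of_pos (div_pos ht hv)
    have : t / v ≤ 1 + ε := (div_le_iff₀ hv).2 htv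
    linarith
  have hsplit : log (u / t) = log (u / v) - log (t / v) := by
    rw [← log_div (div_ne_zero hu hv.ne') (div_pos ht hv).ne', div_div_div_cancel_right₀ hv.ne']
  linarith

theorem half_log_succ_lt_log_succ_sub {m n : ℕ} (hm : 1 ≤ m) (hmn : m ≤ n) :
    1 / 2 * log ((m : ℝ) + 1) < log ((m : ℝ) + 1) - m * (1 / (3 * (n : ℝ))) := by
  have hm1 : (1 : ℝ) ≤ m := by exact_mod_cast hm
  have hround : (m : ℝ) * (1 / (3 * (n : ℝ))) ≤ 1 / 3 := by
    have : (m : ℝ) ≤ n := by exact_mod_cast hmn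
    have : (0 : ℝ) < n := by linarith
    rw [mul_one_div, div_le_div_iff₀ (by positivity) (by norm_num)]
    linarith
  have hlog2 : log 2 ≤ log ((m : ℝ) + 1) := log_le_log two_pos (by linarith)
  linarith [log_two_gt_d9]

/-- The rounded potential-decrease inequality in Section 4 of the paper: if the
updated bounds `u'_j` are rounded up by a multiplicative factor of at most
`1 + 1/(3n)` (with `n ≥ m`), the potential still drops by more than `½ log(m+1)`. -/
theorem statement15 (n m : ℕ) (hm : 1 ≤ m) (hmn : m ≤ n)
    (u w : Fin m → ℝ) (hu : ∀ j, 0 < u j) (hw : ∀ j, 0 ≤ w j)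
    (hsum : ∑ j, u j * w j = 2 * (m : ℝ))
    (u' : Fin m → ℝ)
    (hu' : ∀ j, u' j = if 0 < w j then min (u j) (1 / w j) else u j)
    (ut : Fin m → ℝ)
    (hut : ∀ j, u' j ≤ ut j ∧ ut j ≤ (1 + 1 / (3 * (n : ℝ))) * u' j) :
    (1 / 2) * Real.log ((m : ℝ) + 1) < ∑ j, Real.log (u j / ut j) := by
  set ε : ℝ := 1 / (3 * (n : ℝ))
  have hcap : ∀ j, u' j = u j / max 1 (u j * w j) := fun j =>
    (hu' j).trans (ite_min_one_div_eq_div_max (hu j) (hw j))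
  have hstep : ∀ j, log (max 1 (u j * w j)) - ε ≤ log (u j / ut j) := by
    intro j
    have hu'pos : 0 < u' j := by rw [hcap j]; exact div_pos (hu j) (by positivity)
    have hcapped : log (u j / u' j) = log (max 1 (u j * w j)) := by
      rw [hcap j, div_div_cancel₀ (hu j).ne']
    rw [← hcapped]
    exact log_div_sub_le_log_div (hu j).ne' hu'pos (hu'pos.trans_le (hut j).1) (hut j).2
  have hprod : (m : ℝ) + 1 ≤ ∏ j, max 1 (u j * w j) := by
    have := one_add_sum_sub_card_le_prod_max_one univ fun j => u j * w j
    rw [hsum, card_univ, Fintype.card_fin] at this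
    linarith
  have hdrop : log ((m : ℝ) + 1) ≤ ∑ j, log (max 1 (u j * w j)) := by
    rw [← log_prod fun j _ => by positivity]
    exact log_le_log (by positivity) hprod
  have hbudget := half_log_succ_lt_log_succ_sub hm hmn
  have hsumstep := sum_le_sum fun j (_ : j ∈ univ) => hstep j
  rw [sum_sub_distrib, sum_const, card_univ, Fintype.card_fin, nsmul_eq_mul] at hsumstep
  linarith
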